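/- arXiv:1805.02239 — 2 statements merged into one kernel-verified Lean document; each statement's English description precedes it below -/
import Mathlib

section
/- Let k ≥ 1 be a natural number, let B be a paracompact Hausdorff topological space, let p : E → B be the projection of a fiber bundle with fiber the sphere S^{k−1}, let f : B′ → B be a continuous map from a topological space B′, and let p′ : f*E → B′ be the projection of the pullback bundle. If p is π_q-surjective up to homotopy for every q ≥ 1, then p′ is π_q-surjective up to homotopy for every q ≥ 1. -/
open Set

/-- The unit sphere `S^q ⊆ ℝ^{q+1}`. -/
abbrev Sph (q : ℕ) : Type :=
  ↥(Metric.sphere (0 : EuclideanSpace ℝ (Fin (q + 1))) 1)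

/-- `p : E → B` is (the projection of) a fiber bundle with fiber `F`:
`p` is continuous and every point of `B` has an open neighborhood `U` with a
homeomorphism `p⁻¹(U) ≃ U × F` commuting with the projections to `U`. -/
def IsBundleWithFiber {E B : Type*} [TopologicalSpace E] [TopologicalSpace B]
    (F : Type*) [TopologicalSpace F] (p : E → B) : Prop :=
  Continuous p ∧ ∀ b : B, ∃ U : Set B, IsOpen U ∧ b ∈ U ∧
    ∃ φ : (p ⁻¹' U) ≃ₜ (U × F), ∀ x : p ⁻¹' U, ((φ x).1 : B) = p x

/-- The total space of the pullback of `p : E → B` along `f : B' → B`. -/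
abbrev Pullback {E B B' : Type*} (p : E → B) (f : B' → B) : Type _ :=
  {x : B' × E // f x.1 = p x.2}

/-- The projection of the pullback bundle. -/
def pullbackProj {E B B' : Type*} [TopologicalSpace E] [TopologicalSpace B]
    [TopologicalSpace B'] (p : E → B) (f : B' → B) : C(Pullback p f, B') :=
  ⟨fun x => x.1.1, continuous_fst.comp continuous_subtype_val⟩

/-- A continuous map `p : E → B` is `π_q`-surjective up to homotopy if every
continuous map `S^q → B` is freely homotopic to `p ∘ w` for some continuous
`w : S^q → E`. -/
def PiSurjUpToHomotopy (q : ℕ) {E B : Type*} [TopologicalSpace E]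
    [TopologicalSpace B] (p : C(E, B)) : Prop :=
  ∀ u : C(Sph q, B), ∃ w : C(Sph q, E), (p.comp w).Homotopic u

lemma strip_lift {X E B F : Type*} [TopologicalSpace X] [TopologicalSpace E]
    [TopologicalSpace B] [TopologicalSpace F] {p : E → B} {n : ℕ}
    {W : Fin n → Set X} (hWo : ∀ i, IsOpen (W i)) {U : Fin n → Set B}
    (φ : ∀ i, (p ⁻¹' U i) ≃ₜ (U i × F)) (hφ : ∀ i x, (((φ i) x).1 : B) = p x)
    (K : C(X × ℝ, B)) {a b : ℝ} (hab : a ≤ b)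
    (hKU : ∀ i, ∀ x ∈ W i, ∀ t ∈ Icc a b, K (x, t) ∈ U i)
    (μ : PartitionOfUnity (Fin n) X univ) (hμ : μ.IsSubordinate W)
    (g : C(X, E)) (hg : ∀ x, p (g x) = K (x, a)) :
    ∃ g' : C(X, E), ∀ x, p (g' x) = K (x, b) := by
  classical
  set σ : ℕ → X → ℝ := fun j x =>
    a + (b - a) * ∑ i ∈ Finset.univ.filter (fun i : Fin n => (i : ℕ) < j), μ i x with hσdef
  have σcont : ∀ j, Continuous (σ j) := by
    intro j
    exact continuous_const.add (continuous_const.mul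
      (continuous_finset_sum _ fun i _ => (μ i).continuous))
  have sum_nonneg : ∀ j x, 0 ≤ ∑ i ∈ Finset.univ.filter (fun i : Fin n => (i : ℕ) < j), μ i x :=
    fun j x => Finset.sum_nonneg fun i _ => μ.nonneg i x
  have sum_le_one : ∀ j x, ∑ i ∈ Finset.univ.filter (fun i : Fin n => (i : ℕ) < j), μ i x ≤ 1 := by
    intro j x
    have htot : ∑ i : Fin n, μ i x = 1 := by
      have := μ.sum_eq_one (mem_univ x)
      rwa [finsum_eq_sum_of_fintype] at this
    calc ∑ i ∈ Finset.univ.filter (fun i : Fin n => (i : ℕ) < j), μ i x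
        ≤ ∑ i : Fin n, μ i x :=
          Finset.sum_le_sum_of_subset_of_nonneg (Finset.filter_subset _ _)
            (fun i _ _ => μ.nonneg i x)
      _ = 1 := htot
  have σmem : ∀ j x, σ j x ∈ Icc a b := by
    intro j x
    have h1 := sum_nonneg j x
    have h2 := sum_le_one j x
    have h3 : 0 ≤ (b - a) * ∑ i ∈ Finset.univ.filter (fun i : Fin n => (i : ℕ) < j), μ i x :=
      mul_nonneg (sub_nonneg.mpr hab) h1
    have h4 : (b - a) * ∑ i ∈ Finset.univ.filter (fun i : Fin n => (i : ℕ) < j), μ i x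
        ≤ (b - a) * 1 := mul_le_mul_of_nonneg_left h2 (sub_nonneg.mpr hab)
    simp only [hσdef]
    constructor <;> nlinarith
  have σ0 : ∀ x, σ 0 x = a := by
    intro x; simp [hσdef]
  have σn : ∀ x, σ n x = b := by
    intro x
    have : (Finset.univ.filter (fun i : Fin n => (i : ℕ) < n)) = Finset.univ := by
      ext i; simp [i.isLt]
    have htot : ∑ i : Fin n, μ i x = 1 := by
      have := μ.sum_eq_one (mem_univ x)
      rwa [finsum_eq_sum_of_fintype] at this
    simp only [hσdef, this, htot]
    ring
  have hsum : ∀ j (hj : j < n) x,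
      σ (j + 1) x = σ j x + (b - a) * μ ⟨j, hj⟩ x := by
    intro j hj x
    have hfil : (Finset.univ.filter (fun i : Fin n => (i : ℕ) < j + 1))
        = insert (⟨j, hj⟩ : Fin n) (Finset.univ.filter (fun i : Fin n => (i : ℕ) < j)) := by
      ext i
      simp only [Finset.mem_filter, Finset.mem_univ, true_and, Finset.mem_insert,
        Nat.lt_succ_iff_lt_or_eq, Fin.ext_iff]
      tauto
    have hnot : (⟨j, hj⟩ : Fin n) ∉
        Finset.univ.filter (fun i : Fin n => (i : ℕ) < j) := by simp
    simp only [hσdef, hfil, Finset.sum_insert hnot]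
    ring
  have main : ∀ j, j ≤ n → ∃ g' : C(X, E), ∀ x, p (g' x) = K (x, σ j x) := by
    intro j
    induction j with
    | zero => exact fun _ => ⟨g, fun x => by rw [σ0]; exact hg x⟩
    | succ j ih =>
      intro hj
      have hjn : j < n := hj
      obtain ⟨gj, hgj⟩ := ih (le_of_lt hjn)
      set i : Fin n := ⟨j, hjn⟩ with hi
      have hmemU1 : ∀ x (hx : x ∈ W i), K (x, σ (j + 1) x) ∈ U i :=
        fun x hx => hKU i x hx _ (σmem _ x)
      have hmemE : ∀ x (hx : x ∈ W i), gj x ∈ p ⁻¹' U i := by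
        intro x hx
        show p (gj x) ∈ U i
        rw [hgj x]
        exact hKU i x hx _ (σmem _ x)
      -- the new map on W i
      set F1 : W i → E := fun v =>
        (((φ i).symm (⟨K (v.1, σ (j + 1) v.1), hmemU1 v.1 v.2⟩,
          ((φ i) ⟨gj v.1, hmemE v.1 v.2⟩).2) : p ⁻¹' U i) : E) with hF1
      have hF1cont : Continuous F1 := by
        apply continuous_subtype_val.comp
        apply (φ i).symm.continuous.comp
        apply Continuous.prodMk
        · exact Continuous.subtype_mk
            (K.continuous.comp (continuous_subtype_val.prodMk
              ((σcont (j + 1)).comp continuous_subtype_val))) _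
        · exact continuous_snd.comp ((φ i).continuous.comp
            (Continuous.subtype_mk (gj.continuous.comp continuous_subtype_val) _))
      set h : X → E := fun x => if hx : x ∈ W i then F1 ⟨x, hx⟩ else gj x with hh
      have hval : ∀ x, p (h x) = K (x, σ (j + 1) x) := by
        intro x
        by_cases hx : x ∈ W i
        · simp only [hh, dif_pos hx]
          have := hφ i ((φ i).symm (⟨K (x, σ (j + 1) x), hmemU1 x hx⟩,
            ((φ i) ⟨gj x, hmemE x hx⟩).2))
          rw [Homeomorph.apply_symm_apply] at this
          exact this.symm
        · have hμ0 : μ i x = 0 := by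
            by_contra h0
            exact hx (hμ i (subset_tsupport _ (Function.mem_support.mpr h0)))
          have : σ (j + 1) x = σ j x := by rw [hsum j hjn x, hμ0]; ring
          rw [this]
          simp only [hh, dif_neg hx]
          exact hgj x
      have hheq : ∀ y ∈ (tsupport (μ i))ᶜ, h y = gj y := by
        intro y hy
        by_cases hyW : y ∈ W i
        · have hμ0 : μ i y = 0 := by
            by_contra h0
            exact hy (subset_tsupport _ (Function.mem_support.mpr h0))
          have hσeq : σ (j + 1) y = σ j y := by rw [hsum j hjn y, hμ0]; ring
          simp only [hh, dif_pos hyW, hF1]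
          have hfst : (⟨K (y, σ (j + 1) y), hmemU1 y hyW⟩ : U i)
              = ((φ i) ⟨gj y, hmemE y hyW⟩).1 := by
            apply Subtype.ext
            rw [hφ i ⟨gj y, hmemE y hyW⟩]
            show K (y, σ (j + 1) y) = p (gj y)
            rw [hgj y, hσeq]
          rw [hfst, Prod.mk.eta, Homeomorph.symm_apply_apply]
        · simp only [hh, dif_neg hyW]
      have hcont : Continuous h := by
        rw [continuous_iff_continuousAt]
        intro x
        by_cases hx : x ∈ W i
        · have hrest : ContinuousOn h (W i) := by
            rw [continuousOn_iff_continuous_restrict]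
            have : (W i).domRestrict h = F1 := by
              funext v
              simp only [Set.domRestrict_apply, hh, dif_pos v.2]
            rw [this]; exact hF1cont
          exact hrest.continuousAt ((hWo i).mem_nhds hx)
        · have hxO : x ∈ (tsupport (μ i))ᶜ := fun hc => hx (hμ i hc)
          have hO : IsOpen (tsupport (μ i))ᶜ := (isClosed_tsupport _).isOpen_compl
          have hev : h =ᶠ[nhds x] gj :=
            Filter.eventuallyEq_of_mem (hO.mem_nhds hxO) hheq
          exact (gj.continuous.continuousAt).congr hev.symm
      exact ⟨⟨h, hcont⟩, hval⟩
  obtain ⟨g', hg'⟩ := main n le_rfl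
  exact ⟨g', fun x => by rw [hg' x, σn x]⟩


lemma local_step {X E B F : Type*} [TopologicalSpace X] [TopologicalSpace E]
    [TopologicalSpace B] [TopologicalSpace F]
    [CompactSpace X] [ParacompactSpace X] [NormalSpace X]
    {p : E → B} (hp : IsBundleWithFiber F p) (K : C(X × ℝ, B)) (t : ℝ) :
    ∃ ε > (0 : ℝ), ∀ a b : ℝ, |a - t| < ε → |b - t| < ε →
      (∃ g : C(X, E), ∀ x, p (g x) = K (x, a)) →
      ∃ g' : C(X, E), ∀ x, p (g' x) = K (x, b) := by
  classical
  obtain ⟨hpc, htriv⟩ := hp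
  by_cases hX : IsEmpty X
  · refine ⟨1, one_pos, fun a b _ _ _ => ⟨⟨fun x => isEmptyElim x, ?_⟩, fun x => isEmptyElim x⟩⟩
    rw [continuous_iff_continuousAt]
    exact fun x => isEmptyElim x
  rw [not_isEmpty_iff] at hX
  -- choose local data at each point
  have hloc : ∀ x : X, ∃ (Wx : Set X) (εx : ℝ) (Ux : Set B),
      IsOpen Wx ∧ x ∈ Wx ∧ 0 < εx ∧
      (∀ y ∈ Wx, ∀ s : ℝ, |s - t| < εx → K (y, s) ∈ Ux) ∧
      ∃ φ : (p ⁻¹' Ux) ≃ₜ (Ux × F), ∀ z : p ⁻¹' Ux, ((φ z).1 : B) = p z := by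
    intro x
    obtain ⟨U, hUo, hmem, hφ⟩ := htriv (K (x, t))
    have hopen : IsOpen (K ⁻¹' U) := hUo.preimage K.continuous
    have hxt : (x, t) ∈ K ⁻¹' U := hmem
    rw [isOpen_prod_iff] at hopen
    obtain ⟨u, v, hu, hv, hxu, htv, huv⟩ := hopen x t hxt
    obtain ⟨ε, hε, hball⟩ := Metric.isOpen_iff.mp hv t htv
    refine ⟨u, ε, U, hu, hxu, hε, ?_, hφ⟩
    intro y hy s hs
    have : (y, s) ∈ u ×ˢ v := ⟨hy, hball (by rwa [Metric.mem_ball, Real.dist_eq])⟩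
    exact huv this
  choose W εf U hWo hxW hεf hKU hφex using hloc
  -- finite subcover
  obtain ⟨s, hs⟩ := isCompact_univ.elim_finite_subcover W hWo
    (fun x _ => mem_iUnion.mpr ⟨x, hxW x⟩)
  have hs0 : s.Nonempty := by
    obtain ⟨x0⟩ := hX
    obtain ⟨y, hy, -⟩ := mem_iUnion₂.mp (hs (mem_univ x0))
    exact ⟨y, hy⟩
  set n := s.card with hn
  haveI : Nonempty (Fin n) := ⟨⟨0, Finset.card_pos.mpr hs0⟩⟩
  set e : Fin n → X := fun i => (s.equivFin.symm i : X) with he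
  set ε : ℝ := Finset.univ.inf' Finset.univ_nonempty (fun i => εf (e i)) with hεdef
  have hεpos : 0 < ε := by
    rw [hεdef, Finset.lt_inf'_iff]
    exact fun i _ => hεf (e i)
  have hcover : univ ⊆ ⋃ i, W (e i) := by
    intro x _
    obtain ⟨y, hy, hxy⟩ := mem_iUnion₂.mp (hs (mem_univ x))
    exact mem_iUnion.mpr ⟨s.equivFin ⟨y, hy⟩, by
      simpa [he, Equiv.symm_apply_apply] using hxy⟩
  refine ⟨ε, hεpos, fun a b ha hb ⟨g, hg⟩ => ?_⟩
  obtain ⟨μ, hμ⟩ := PartitionOfUnity.exists_isSubordinate isClosed_univ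
    (fun i => W (e i)) (fun i => hWo (e i)) hcover
  have habs : ∀ c d r : ℝ, |c - t| < ε → |d - t| < ε → r ∈ Icc c d → |r - t| < ε := by
    intro c d r hc hd hr
    rw [abs_lt] at hc hd ⊢
    constructor <;> [nlinarith [hr.1]; nlinarith [hr.2]]
  have hεle : ∀ i : Fin n, ε ≤ εf (e i) := fun i =>
    Finset.inf'_le _ (Finset.mem_univ i)
  rcases le_total a b with hab | hab
  · exact strip_lift (fun i => hWo (e i)) (fun i => (hφex (e i)).choose)
      (fun i => (hφex (e i)).choose_spec) K hab
      (fun i x hx r hr => hKU (e i) x hx r (lt_of_lt_of_le (habs a b r ha hb hr) (hεle i)))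
      μ hμ g hg
  · -- reflect time
    set K' : C(X × ℝ, B) := ⟨fun z => K (z.1, a + b - z.2),
      K.continuous.comp (continuous_fst.prodMk (continuous_const.sub continuous_snd))⟩ with hK'
    have hKa : ∀ x : X, K' (x, a) = K (x, b) := fun x => by simp [hK']
    have hKb : ∀ x : X, K' (x, b) = K (x, a) := fun x => by simp [hK']
    obtain ⟨g', hg'⟩ := strip_lift (p := p) (fun i => hWo (e i)) (fun i => (hφex (e i)).choose)
      (fun i => (hφex (e i)).choose_spec) K' hab
      (fun i x hx r hr => by
        show K (x, a + b - r) ∈ U (e i)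
        have : a + b - r ∈ Icc b a := ⟨by linarith [hr.2], by linarith [hr.1]⟩
        exact hKU (e i) x hx _ (lt_of_lt_of_le (habs b a _ hb ha this) (hεle i)))
      μ hμ g (fun x => by rw [hg x, ← hKb x])
    exact ⟨g', fun x => by rw [hg' x, hKa x]⟩

/-- If `p : E → B` is a fiber bundle with fiber `S^{k-1}` over a paracompact
Hausdorff space `B` and `p` is `π_q`-surjective up to homotopy for every
`q ≥ 1`, then so is the projection of any pullback bundle `f*E → B'`. -/
theorem stmt_5 (k : ℕ) (hk : 1 ≤ k)
    {E B B' : Type*} [TopologicalSpace E] [TopologicalSpace B] [TopologicalSpace B']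
    [ParacompactSpace B] [T2Space B]
    (p : C(E, B)) (hp : IsBundleWithFiber (Sph (k - 1)) ⇑p)
    (f : C(B', B))
    (hsurj : ∀ q : ℕ, 1 ≤ q → PiSurjUpToHomotopy q p) :
    ∀ q : ℕ, 1 ≤ q → PiSurjUpToHomotopy q (pullbackProj ⇑p ⇑f) := by
  intro q hq u
  -- apply the hypothesis to `f ∘ u`
  obtain ⟨w, hw⟩ := hsurj q hq (f.comp u)
  obtain ⟨H⟩ := hw
  -- extend the homotopy to a map on `X × ℝ` by clamping
  set X := Sph q with hX
  set K : C(X × ℝ, B) :=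
    ⟨fun z => H (Set.projIcc (0 : ℝ) 1 zero_le_one z.2, z.1),
      H.continuous.comp
        (Continuous.prodMk (continuous_projIcc.comp continuous_snd) continuous_fst)⟩
    with hK
  have hK0 : ∀ x : X, K (x, 0) = p (w x) := by
    intro x
    show H (Set.projIcc (0 : ℝ) 1 zero_le_one 0, x) = p (w x)
    rw [Set.projIcc_left]
    exact H.apply_zero x
  have hK1 : ∀ x : X, K (x, 1) = f (u x) := by
    intro x
    show H (Set.projIcc (0 : ℝ) 1 zero_le_one 1, x) = f (u x)
    rw [Set.projIcc_right]
    exact H.apply_one x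
  -- the set of times at which the homotopy can be lifted is clopen and nonempty
  set T : Set ℝ := {t | ∃ g : C(X, E), ∀ x, p (g x) = K (x, t)} with hT
  have key : ∀ t : ℝ, ∃ ε > (0 : ℝ), ∀ a b : ℝ, |a - t| < ε → |b - t| < ε →
      a ∈ T → b ∈ T := fun t => local_step hp K t
  have hopen : IsOpen T := by
    rw [Metric.isOpen_iff]
    intro t ht
    obtain ⟨ε, hε, htrans⟩ := key t
    refine ⟨ε, hε, fun s hs => ?_⟩
    rw [Metric.mem_ball, Real.dist_eq] at hs
    exact htrans t s (by simpa using hε) hs ht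
  have hclosed : IsClosed T := by
    rw [← closure_subset_iff_isClosed]
    intro t ht
    obtain ⟨ε, hε, htrans⟩ := key t
    obtain ⟨s, hsT, hst⟩ := Metric.mem_closure_iff.mp ht ε hε
    rw [Real.dist_eq, abs_sub_comm] at hst
    exact htrans s t hst (by simpa using hε) hsT
  have h0 : (0 : ℝ) ∈ T := ⟨w, fun x => (hK0 x).symm⟩
  have hTuniv : T = univ := IsClopen.eq_univ ⟨hclosed, hopen⟩ ⟨0, h0⟩
  have h1 : (1 : ℝ) ∈ T := hTuniv ▸ mem_univ (1 : ℝ)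
  obtain ⟨g, hg⟩ := h1
  -- assemble the lift into the pullback
  have hfu : ∀ x : X, f (u x) = p (g x) := fun x => by rw [hg x, hK1 x]
  refine ⟨⟨fun x => ⟨(u x, g x), hfu x⟩,
    Continuous.subtype_mk (u.continuous.prodMk g.continuous) _⟩, ?_⟩
  have : (pullbackProj ⇑p ⇑f).comp ⟨fun x => ⟨(u x, g x), hfu x⟩,
      Continuous.subtype_mk (u.continuous.prodMk g.continuous) _⟩ = u := by
    ext x; rfl
  rw [this]
end

section
/- Let G be a group, let r ≥ 1 be a natural number, let A be a finite-index subgroup of G that is isomorphic (as a group) to the free abelian group ℤ^r, and let N be a cyclic normal subgroup of G (N may be trivial, finite cyclic, or infinite cyclic). Then there exist a natural number m with m ≥ r − 1 and a finite-index subgroup H of the quotient group G/N such that H is isomorphic to the free abelian group ℤ^m. -/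
/-- The subgroup of powers of `ofAdd a` has finite index in `Multiplicative ℤ` when `a ≠ 0`. -/
lemma aux_index_zpowers_ne_zero (a : ℤ) (ha : a ≠ 0) :
    (Subgroup.zpowers (Multiplicative.ofAdd a)).index ≠ 0 := by
  haveI : NeZero a.natAbs := ⟨Int.natAbs_ne_zero.mpr ha⟩
  set χ : Multiplicative ℤ →* Multiplicative (ZMod a.natAbs) :=
    AddMonoidHom.toMultiplicative (Int.castAddHom (ZMod a.natAbs)) with hχ
  have hker : Subgroup.zpowers (Multiplicative.ofAdd a) = χ.ker := by
    ext x
    rw [Subgroup.mem_zpowers_iff, MonoidHom.mem_ker]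
    constructor
    · rintro ⟨k, rfl⟩
      show Multiplicative.ofAdd ((Multiplicative.toAdd ((Multiplicative.ofAdd a) ^ k) : ℤ) :
        ZMod a.natAbs) = 1
      rw [toAdd_zpow]
      simp only [toAdd_ofAdd, zsmul_eq_mul]
      rw [← ofAdd_zero]
      congr 1
      rw [ZMod.intCast_zmod_eq_zero_iff_dvd]
      exact Dvd.dvd.mul_left (Int.natAbs_dvd.mpr dvd_rfl) k
    · intro hx
      have : ((Multiplicative.toAdd x : ℤ) : ZMod a.natAbs) = 0 := by
        have := congrArg Multiplicative.toAdd hx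
        exact this
      rw [ZMod.intCast_zmod_eq_zero_iff_dvd, Int.natAbs_dvd] at this
      obtain ⟨k, hk⟩ := this
      exact ⟨k, by
        apply Multiplicative.toAdd.injective
        rw [toAdd_zpow, toAdd_ofAdd]
        simp [hk, mul_comm]⟩
  rw [hker, Subgroup.index_ker]
  have : Nonempty χ.range := ⟨1⟩
  have : Finite χ.range := Subtype.finite
  exact Nat.card_pos.ne'

/-- If a group `G` has a finite-index subgroup isomorphic to `ℤ^r` (`r ≥ 1`)
and `N` is a cyclic normal subgroup of `G`, then the quotient `G/N` has a
finite-index subgroup isomorphic to `ℤ^m` for some `m ≥ r - 1`. -/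
theorem stmt_10 (G : Type*) [Group G] (r : ℕ) (hr : 1 ≤ r)
    (A : Subgroup G) (hA : A.FiniteIndex)
    (eA : A ≃* Multiplicative (Fin r → ℤ))
    (N : Subgroup G) [N.Normal] (hN : IsCyclic N) :
    ∃ m : ℕ, r - 1 ≤ m ∧
      ∃ H : Subgroup (G ⧸ N), H.FiniteIndex ∧
        Nonempty (H ≃* Multiplicative (Fin m → ℤ)) := by
  classical
  haveI := hN
  set q : G →* G ⧸ N := QuotientGroup.mk' N with hq
  set f : Multiplicative (Fin r → ℤ) →* G ⧸ N :=
    q.comp (A.subtype.comp eA.symm.toMonoidHom) with hf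
  -- the range of `f` has finite index
  have hrange : f.range.index ≠ 0 := by
    have h1 : f.range = A.map q := by
      rw [hf, MonoidHom.range_comp, MonoidHom.range_comp,
        MonoidHom.range_eq_top_of_surjective _ eA.symm.surjective,
        ← MonoidHom.range_eq_map, Subgroup.range_subtype]
    rw [h1, A.index_map q]
    have h2 : q.range = ⊤ :=
      MonoidHom.range_eq_top_of_surjective _ (QuotientGroup.mk'_surjective N)
    rw [h2, Subgroup.index_top, mul_one]
    have h3 : (A ⊔ q.ker).index ∣ A.index := Subgroup.index_dvd_of_le le_sup_left
    intro h0
    rw [h0] at h3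
    exact hA.index_ne_zero (Nat.eq_zero_of_zero_dvd h3)
  -- the kernel of `f` is cyclic
  have hmemN : ∀ x ∈ f.ker, (eA.symm x : G) ∈ N := by
    intro x hx
    rw [MonoidHom.mem_ker] at hx
    exact (QuotientGroup.eq_one_iff _).mp hx
  set j : f.ker →* N :=
    { toFun := fun x => ⟨eA.symm x.1, hmemN x.1 x.2⟩
      map_one' := by ext; simp
      map_mul' := fun x y => by ext; simp } with hj
  have hjinj : Function.Injective j := by
    intro x y hxy
    have : (eA.symm x.1 : G) = (eA.symm y.1 : G) := congrArg (fun z : N => (z : G)) hxy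
    exact Subtype.ext (eA.symm.injective (Subtype.ext this))
  have hKcy : IsCyclic f.ker := by
    have : IsCyclic j.range := Subgroup.isCyclic j.range
    exact isCyclic_of_surjective (MonoidHom.ofInjective hjinj).symm
      (MonoidHom.ofInjective hjinj).symm.surjective
  obtain ⟨g, hg⟩ := hKcy.exists_generator
  set v : Fin r → ℤ := Multiplicative.toAdd g.1 with hv
  have key : ∀ x ∈ f.ker, ∃ c : ℤ, Multiplicative.toAdd x = c • v := by
    intro x hx
    obtain ⟨c, hc⟩ := Subgroup.mem_zpowers_iff.mp (hg ⟨x, hx⟩)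
    refine ⟨c, ?_⟩
    have : g.1 ^ c = x := congrArg Subtype.val hc
    rw [← this, toAdd_zpow]
  by_cases hv0 : v = 0
  · -- kernel is trivial : `G/N` contains `ℤ^r` of finite index
    have hker : f.ker = ⊥ := by
      rw [Subgroup.eq_bot_iff_forall]
      intro x hx
      obtain ⟨c, hc⟩ := key x hx
      apply Multiplicative.toAdd.injective
      rw [hc, hv0, smul_zero]; rfl
    have hfinj : Function.Injective f := (MonoidHom.ker_eq_bot_iff f).mp hker
    exact ⟨r, Nat.sub_le r 1, f.range, ⟨hrange⟩, ⟨(MonoidHom.ofInjective hfinj).symm⟩⟩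
  · -- kernel infinite cyclic
    obtain ⟨i, hvi⟩ := Function.ne_iff.mp hv0
    simp only [Pi.zero_apply] at hvi
    -- the "insert 0 at coordinate i" homomorphism
    set e₀ : ({j : Fin r // j ≠ i} → ℤ) →+ (Fin r → ℤ) :=
      { toFun := fun x j => if h : j = i then 0 else x ⟨j, h⟩
        map_zero' := by funext j; by_cases h : j = i <;> simp [h]
        map_add' := fun x y => by funext j; by_cases h : j = i <;> simp [h] } with he₀
    set ψ : Multiplicative ({j : Fin r // j ≠ i} → ℤ) →* Multiplicative (Fin r → ℤ) :=
      AddMonoidHom.toMultiplicative e₀ with hψ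
    set Φ : Multiplicative ({j : Fin r // j ≠ i} → ℤ) →* G ⧸ N := f.comp ψ with hΦ
    have hΦinj : Function.Injective Φ := by
      rw [injective_iff_map_eq_one]
      intro x hx
      obtain ⟨c, hc⟩ := key (ψ x) hx
      have h1 : Multiplicative.toAdd (ψ x) = e₀ (Multiplicative.toAdd x) := rfl
      have h2 : (0 : ℤ) = c * v i := by
        have := congrFun hc i
        rw [h1] at this
        simpa [he₀] using this
      have hc0 : c = 0 := by
        rcases mul_eq_zero.mp h2.symm with h | h
        · exact h
        · exact absurd h hvi
      apply Multiplicative.toAdd.injective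
      funext s
      have := congrFun hc s.1
      rw [h1, hc0, zero_smul] at this
      have h3 : e₀ (Multiplicative.toAdd x) s.1 = Multiplicative.toAdd x s := dif_neg s.2
      rw [h3] at this
      simpa using this
    refine ⟨r - 1, le_refl _, Φ.range, ?_, ?_⟩
    · -- finite index
      have hr1 : Φ.range = ψ.range.map f := MonoidHom.range_comp f ψ
      have hD : (ψ.range ⊔ f.ker).index ≠ 0 := by
        set D : Subgroup (Multiplicative (Fin r → ℤ)) := ψ.range ⊔ f.ker with hD
        set π : Multiplicative (Fin r → ℤ) →* Multiplicative ℤ :=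
          AddMonoidHom.toMultiplicative (Pi.evalAddMonoidHom (fun _ : Fin r => ℤ) i) with hπ
        have hπsurj : Function.Surjective π := fun y =>
          ⟨Multiplicative.ofAdd (Pi.single i (Multiplicative.toAdd y)), by
            apply Multiplicative.toAdd.injective
            simp [hπ, Pi.evalAddMonoidHom]⟩
        have hkerπ : π.ker ≤ D := by
          intro x hx
          rw [MonoidHom.mem_ker] at hx
          have hx0 : Multiplicative.toAdd x i = 0 := by
            have := congrArg Multiplicative.toAdd hx
            simpa [hπ, Pi.evalAddMonoidHom] using this
          apply le_sup_left (a := ψ.range)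
          refine ⟨Multiplicative.ofAdd (fun s : {j : Fin r // j ≠ i} =>
            Multiplicative.toAdd x s.1), ?_⟩
          apply Multiplicative.toAdd.injective
          show e₀ _ = Multiplicative.toAdd x
          funext j
          by_cases h : j = i
          · subst h; simpa [he₀] using hx0.symm
          · simp [he₀, h]
        have hcm : Subgroup.comap π (Subgroup.map π D) = D := by
          rw [Subgroup.comap_map_eq]
          exact sup_eq_left.mpr hkerπ
        have hDi : D.index = (Subgroup.map π D).index := by
          conv_lhs => rw [← hcm]
          exact (Subgroup.map π D).index_comap_of_surjective hπsurj
        rw [hDi]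
        have hzle : Subgroup.zpowers (π g.1) ≤ Subgroup.map π D := by
          rw [Subgroup.zpowers_le]
          exact ⟨g.1, le_sup_right (a := ψ.range) g.2, rfl⟩
        have hdvd : (Subgroup.map π D).index ∣ (Subgroup.zpowers (π g.1)).index :=
          Subgroup.index_dvd_of_le hzle
        have hπg : π g.1 = Multiplicative.ofAdd (v i) := rfl
        intro h0
        rw [h0] at hdvd
        exact aux_index_zpowers_ne_zero (v i) hvi (Nat.eq_zero_of_zero_dvd hdvd)
      constructor
      intro h0
      rw [hr1, ψ.range.index_map f] at h0
      rcases Nat.mul_eq_zero.mp h0 with h | h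
      · exact hD h
      · exact hrange h
    · -- the isomorphism with ℤ^(r-1)
      have hcard : Fintype.card {j : Fin r // j ≠ i} = r - 1 := by
        simp [Fintype.card_subtype_compl]
      set σ : Fin (r - 1) ≃ {j : Fin r // j ≠ i} :=
        (Fintype.equivFinOfCardEq hcard).symm with hσ
      set eS : ({j : Fin r // j ≠ i} → ℤ) ≃+ (Fin (r - 1) → ℤ) :=
        { toEquiv := Equiv.piCongrLeft' (fun _ => ℤ) σ.symm
          map_add' := fun a b => rfl } with heS
      exact ⟨((MonoidHom.ofInjective hΦinj).symm.trans (AddEquiv.toMultiplicative eS))⟩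
end
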